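/- For real sequences satisfying a_{k+1} ≤ (1-τ_k) a_k + 2δ_k with τ_k = 2/(k+3) and constant δ_k = δ ≥ 0, one has a_k ≤ 2a_0/((k+1)(k+2)) + 2δ·∑_{i=0}^{k-1} (i+2)(i+3)/((k+1)(k+2)) ≤ 2a_0/((k+1)(k+2)) + (2/3)δ(k+5) for all k ≥ 1. -/

import Mathlib

/-!
Multiplying the recursion by `(k + 2) (k + 3)` turns it into
`w (k + 1) a (k + 1) ≤ w k a k + 2 δ w (k + 1)` for the weights `w k = (k + 1) (k + 2)`, since
`(1 - τ_k) w (k + 1) = w k`. Telescoping gives `w k a k ≤ 2 a 0 + 2 δ ∑_{i < k} w (i + 1)`, and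
the weights sum to `((k + 1) (k + 2) (k + 3) - 6) / 3 ≤ w k (k + 5) / 3`.
-/

open Finset

theorem le_add_sum_range_of_succ_le {α : Type*} [AddCommGroup α] [PartialOrder α]
    [IsOrderedAddMonoid α] {u b : ℕ → α} (h : ∀ k, u (k + 1) ≤ u k + b k) (n : ℕ) :
    u n ≤ u 0 + ∑ i ∈ range n, b i := by
  rw [← sub_le_iff_le_add', ← sum_range_sub]
  exact sum_le_sum fun i _ ↦ sub_le_iff_le_add'.mpr (h i)

theorem three_mul_sum_range_add_two_mul_add_three (k : ℕ) :
    3 * ∑ i ∈ range k, ((i : ℝ) + 2) * ((i : ℝ) + 3) =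
      ((k : ℝ) + 1) * ((k : ℝ) + 2) * ((k : ℝ) + 3) - 6 := by
  induction k with
  | zero => norm_num
  | succ n ih =>
    rw [sum_range_succ, mul_add, ih]
    push_cast
    ring

theorem weighted_succ_le_of_rate_rec {a : ℕ → ℝ} {δ : ℝ}
    (hrec : ∀ k : ℕ, a (k + 1) ≤ (1 - 2 / ((k : ℝ) + 3)) * a k + 2 * δ) (k : ℕ) :
    ((k + 1 : ℕ) + 1 : ℝ) * ((k + 1 : ℕ) + 2) * a (k + 1) ≤
      ((k : ℝ) + 1) * ((k : ℝ) + 2) * a k + 2 * δ * (((k : ℝ) + 2) * ((k : ℝ) + 3)) := by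
  have hweight : ((k : ℝ) + 2) * ((k : ℝ) + 3) * (1 - 2 / ((k : ℝ) + 3)) =
      ((k : ℝ) + 1) * ((k : ℝ) + 2) := by
    field_simp
    ring
  calc ((k + 1 : ℕ) + 1 : ℝ) * ((k + 1 : ℕ) + 2) * a (k + 1)
      = ((k : ℝ) + 2) * ((k : ℝ) + 3) * a (k + 1) := by push_cast; ring
    _ ≤ ((k : ℝ) + 2) * ((k : ℝ) + 3) * ((1 - 2 / ((k : ℝ) + 3)) * a k + 2 * δ) :=
        mul_le_mul_of_nonneg_left (hrec k) (by positivity)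
    _ = ((k : ℝ) + 1) * ((k : ℝ) + 2) * a k + 2 * δ * (((k : ℝ) + 2) * ((k : ℝ) + 3)) := by
        rw [mul_add, ← mul_assoc, hweight]
        ring

theorem weighted_le_of_rate_rec {a : ℕ → ℝ} {δ : ℝ}
    (hrec : ∀ k : ℕ, a (k + 1) ≤ (1 - 2 / ((k : ℝ) + 3)) * a k + 2 * δ) (k : ℕ) :
    ((k : ℝ) + 1) * ((k : ℝ) + 2) * a k ≤
      2 * a 0 + 2 * δ * ∑ i ∈ range k, ((i : ℝ) + 2) * ((i : ℝ) + 3) := by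
  have h := le_add_sum_range_of_succ_le (u := fun k : ℕ ↦ ((k : ℝ) + 1) * ((k : ℝ) + 2) * a k)
    (weighted_succ_le_of_rate_rec hrec) k
  rw [← mul_sum] at h
  norm_num at h
  linarith

theorem constant_accuracy_rate_general (a : ℕ → ℝ) (δ : ℝ)
    (hδ : 0 ≤ δ)
    (hrec : ∀ k : ℕ, a (k + 1) ≤ (1 - 2 / ((k : ℝ) + 3)) * a k + 2 * δ) :
    ∀ k : ℕ, 1 ≤ k →
      a k ≤ 2 * a 0 / (((k : ℝ) + 1) * ((k : ℝ) + 2)) +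
          2 * δ * ∑ i ∈ Finset.range k,
            ((i : ℝ) + 2) * ((i : ℝ) + 3) / (((k : ℝ) + 1) * ((k : ℝ) + 2)) ∧
      2 * a 0 / (((k : ℝ) + 1) * ((k : ℝ) + 2)) +
          2 * δ * ∑ i ∈ Finset.range k,
            ((i : ℝ) + 2) * ((i : ℝ) + 3) / (((k : ℝ) + 1) * ((k : ℝ) + 2)) ≤
        2 * a 0 / (((k : ℝ) + 1) * ((k : ℝ) + 2)) + (2 * δ / 3) * ((k : ℝ) + 5) := by
  intro k _
  set w : ℝ := ((k : ℝ) + 1) * ((k : ℝ) + 2)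
  set S : ℝ := ∑ i ∈ range k, ((i : ℝ) + 2) * ((i : ℝ) + 3)
  have hw : 0 < w := by positivity
  have hS : S / w ≤ ((k : ℝ) + 5) / 3 := by
    rw [div_le_div_iff₀ hw three_pos]
    nlinarith [three_mul_sum_range_add_two_mul_add_three k]
  rw [← sum_div]
  constructor
  · rw [mul_div_assoc', ← add_div, le_div_iff₀ hw, mul_comm]
    exact weighted_le_of_rate_rec hrec k
  · have := mul_le_mul_of_nonneg_left hS (by positivity : (0 : ℝ) ≤ 2 * δ)
    linarith

theorem constant_accuracy_rate (a : ℕ → ℝ) (δ : ℝ)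
    (ha0 : 0 ≤ a 0) (hδ : 0 ≤ δ)
    (hrec : ∀ k : ℕ, a (k + 1) ≤ (1 - 2 / ((k : ℝ) + 3)) * a k + 2 * δ) :
    ∀ k : ℕ, 1 ≤ k →
      a k ≤ 2 * a 0 / (((k : ℝ) + 1) * ((k : ℝ) + 2)) +
          2 * δ * ∑ i ∈ Finset.range k,
            ((i : ℝ) + 2) * ((i : ℝ) + 3) / (((k : ℝ) + 1) * ((k : ℝ) + 2)) ∧
      2 * a 0 / (((k : ℝ) + 1) * ((k : ℝ) + 2)) +
          2 * δ * ∑ i ∈ Finset.range k,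
            ((i : ℝ) + 2) * ((i : ℝ) + 3) / (((k : ℝ) + 1) * ((k : ℝ) + 2)) ≤
        2 * a 0 / (((k : ℝ) + 1) * ((k : ℝ) + 2)) + (2 * δ / 3) * ((k : ℝ) + 5) :=
  constant_accuracy_rate_general a δ hδ hrec
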